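/- Let A be an n×n real matrix and B an n×m real matrix with n, m ≥ 1, and let T > 0. The set of states reachable from the origin at time T, namely { ∫₀ᵀ exp((T−s)·A) *ᵥ (B *ᵥ u(s)) ds : u : ℝ → ℝᵐ continuous }, is exactly the column span of the Kalman matrix [B AB ⋯ A^{n−1}B]. -/

import Mathlib

/-!
The reachable set is the range of the linear map `u ↦ ∫₀ᵀ exp((T-s)A) B u(s) ds`, so it
suffices to show that a functional `φ` kills this range iff it kills the Kalman span. Testing
`φ` against the Gramian control `u(s) = (φ ∘ exp((T-s)A) B)ᵀ` gives `∫₀ᵀ |u|² = 0`, so `φ`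
kills the range iff `t ↦ φ(exp(tA) B v)` vanishes on `[0, T]`. Differentiating at `0`, and
conversely summing the exponential series, this holds iff `φ(Aᵏ B v) = 0` for all `k`; by
Cayley–Hamilton `k < n` suffices.
-/

open Matrix MeasureTheory Set

section Exponential

variable {𝔸 F : Type*} [NormedRing 𝔸] [NormedAlgebra ℝ 𝔸] [CompleteSpace 𝔸]
  [NormedAddCommGroup F] [NormedSpace ℝ F]

theorem ContinuousLinearMap.map_exp_smul_eq_zero_of_map_pow_eq_zero (ℓ : 𝔸 →L[ℝ] F)
    {a : 𝔸} (h : ∀ k, ℓ (a ^ k) = 0) (t : ℝ) : ℓ (NormedSpace.exp (t • a)) = 0 := by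
  have hsum := (NormedSpace.exp_series_hasSum_exp' (𝕂 := ℝ) (t • a)).mapL ℓ
  simp only [smul_pow, smul_smul, map_smul, h, smul_zero] at hsum
  exact hsum.unique hasSum_zero

theorem ContinuousLinearMap.map_pow_eq_zero_of_map_exp_smul_eq_zero (ℓ : 𝔸 →L[ℝ] F)
    {a : 𝔸} {T : ℝ} (hT : 0 < T) (h : ∀ t ∈ Icc 0 T, ℓ (NormedSpace.exp (t • a)) = 0)
    (k : ℕ) : ℓ (a ^ k) = 0 := by
  set g : ℕ → ℝ → F := fun k t ↦ ℓ (a ^ k * NormedSpace.exp (t • a))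
  have hderiv (k : ℕ) (t : ℝ) : HasDerivAt (g k) (g (k + 1) t) t := by
    have := ℓ.hasFDerivAt.comp_hasDerivAt t
      ((hasDerivAt_exp_smul_const' (𝕂 := ℝ) a t).const_mul (a ^ k))
    rwa [← mul_assoc, ← pow_succ] at this
  have hzero (k : ℕ) : EqOn (g k) 0 (Icc 0 T) := by
    induction k with
    | zero => simpa [g, EqOn] using h
    | succ k ih =>
      intro t ht
      exact (uniqueDiffOn_Icc hT t ht).eq_deriv _
        ((hderiv k t).hasDerivWithinAt.congr ih.symm (ih ht).symm) (hasDerivWithinAt_const t _ 0)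
  simpa [g] using hzero k (left_mem_Icc.2 hT.le)

end Exponential

theorem LinearMap.apply_eq_dotProduct {R ι : Type*} [CommSemiring R] [Fintype ι]
    [DecidableEq ι] (ψ : (ι → R) →ₗ[R] R) (x : ι → R) :
    ψ x = x ⬝ᵥ fun j ↦ ψ (Pi.single j 1) := by
  conv_lhs => rw [pi_eq_sum_univ' x]
  simp [dotProduct]

theorem eqOn_zero_of_intervalIntegral_eq_zero {f : ℝ → ℝ} {a b : ℝ} (hab : a < b)
    (hf : Continuous f) (hf₀ : 0 ≤ f) (hint : ∫ x in a..b, f x = 0) : EqOn f 0 (Icc a b) := by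
  have hae := (intervalIntegral.integral_eq_zero_iff_of_le_of_nonneg_ae hab.le
    (.of_forall hf₀) (hf.intervalIntegrable a b)).1 hint
  rw [Measure.restrict_congr_set Ioc_ae_eq_Icc] at hae
  exact Measure.eqOn_Icc_of_ae_eq _ hab.ne hae hf.continuousOn continuousOn_const

namespace Matrix

variable {n m : ℕ} {R : Type*} [CommRing R]

theorem pow_mulVec_mem_span_pow_mulVec [Nontrivial R]
    (A : Matrix (Fin n) (Fin n) R) (x : Fin n → R) (k : ℕ) :
    A ^ k *ᵥ x ∈ Submodule.span R {y | ∃ i < n, y = A ^ i *ᵥ x} := by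
  rcases n.eq_zero_or_pos with rfl | hn
  · rw [Subsingleton.elim (A ^ k *ᵥ x) 0]
    exact Submodule.zero_mem _
  have hdeg : (Polynomial.X ^ k %ₘ A.charpoly).natDegree < n := by
    have hne : A.charpoly ≠ 1 := fun h ↦ by
      simpa [h, hn.ne] using A.charpoly_natDegree_eq_dim
    simpa using Polynomial.natDegree_modByMonic_lt _ A.charpoly_monic hne
  rw [A.pow_eq_aeval_mod_charpoly, Polynomial.aeval_eq_sum_range' hdeg, sum_mulVec]
  refine Submodule.sum_mem _ fun i hi ↦ ?_
  rw [smul_mulVec]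
  exact Submodule.smul_mem _ _ (Submodule.subset_span ⟨i, Finset.mem_range.1 hi, rfl⟩)

def kalmanSpan (A : Matrix (Fin n) (Fin n) R) (B : Matrix (Fin n) (Fin m) R) :
    Submodule R (Fin n → R) :=
  Submodule.span R {w | ∃ k < n, ∃ v : Fin m → R, w = A ^ k *ᵥ (B *ᵥ v)}

theorem pow_mulVec_mulVec_mem_kalmanSpan [Nontrivial R] (A : Matrix (Fin n) (Fin n) R)
    (B : Matrix (Fin n) (Fin m) R) (k : ℕ) (v : Fin m → R) :
    A ^ k *ᵥ (B *ᵥ v) ∈ kalmanSpan A B :=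
  Submodule.span_mono (by rintro _ ⟨i, hi, rfl⟩; exact ⟨i, hi, v, rfl⟩)
    (A.pow_mulVec_mem_span_pow_mulVec _ k)

theorem mem_dualAnnihilator_kalmanSpan_iff [Nontrivial R] (A : Matrix (Fin n) (Fin n) R)
    (B : Matrix (Fin n) (Fin m) R) (φ : Module.Dual R (Fin n → R)) :
    φ ∈ (kalmanSpan A B).dualAnnihilator ↔ ∀ v k, φ (A ^ k *ᵥ (B *ᵥ v)) = 0 := by
  rw [Submodule.mem_dualAnnihilator]
  refine ⟨fun hφ v k ↦ hφ _ (pow_mulVec_mulVec_mem_kalmanSpan A B k v), fun h w hw ↦ ?_⟩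
  suffices kalmanSpan A B ≤ LinearMap.ker φ from this hw
  refine Submodule.span_le.2 ?_
  rintro _ ⟨k, -, v, rfl⟩
  exact h v k

theorem continuous_exp_smul (A : Matrix (Fin n) (Fin n) ℝ) :
    Continuous fun t : ℝ ↦ NormedSpace.exp (t • A) := by
  -- matrices carry no global norm; any norm inducing the product topology will do
  let := Matrix.linftyOpNormedRing (n := Fin n) (α := ℝ)
  let := Matrix.linftyOpNormedAlgebra (R := ℝ) (n := Fin n) (α := ℝ)
  exact (differentiable_exp_smul_const ℝ A).continuous

theorem forall_map_exp_smul_mulVec_eq_zero_iff (A : Matrix (Fin n) (Fin n) ℝ)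
    (φ : Module.Dual ℝ (Fin n → ℝ)) (w : Fin n → ℝ) {T : ℝ} (hT : 0 < T) :
    (∀ t ∈ Icc 0 T, φ (NormedSpace.exp (t • A) *ᵥ w) = 0) ↔ ∀ k, φ (A ^ k *ᵥ w) = 0 := by
  let := Matrix.linftyOpNormedRing (n := Fin n) (α := ℝ)
  let := Matrix.linftyOpNormedAlgebra (R := ℝ) (n := Fin n) (α := ℝ)
  let ℓ : Matrix (Fin n) (Fin n) ℝ →L[ℝ] ℝ :=
    (φ ∘ₗ (mulVecBilin ℝ ℝ).flip w).toContinuousLinearMap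
  exact ⟨ℓ.map_pow_eq_zero_of_map_exp_smul_eq_zero hT,
    fun h t _ ↦ ℓ.map_exp_smul_eq_zero_of_map_pow_eq_zero h t⟩

theorem continuous_exp_sub_smul_mulVec (A : Matrix (Fin n) (Fin n) ℝ) (T : ℝ)
    {f : ℝ → Fin n → ℝ} (hf : Continuous f) :
    Continuous fun s ↦ NormedSpace.exp ((T - s) • A) *ᵥ f s :=
  ((continuous_exp_smul A).comp (continuous_const.sub continuous_id)).matrix_mulVec hf

theorem intervalIntegrable_exp_sub_smul_mulVec_mulVec (A : Matrix (Fin n) (Fin n) ℝ)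
    (B : Matrix (Fin n) (Fin m) ℝ) (T : ℝ) (u : C(ℝ, Fin m → ℝ)) :
    IntervalIntegrable (fun s ↦ NormedSpace.exp ((T - s) • A) *ᵥ (B *ᵥ u s)) volume 0 T :=
  (continuous_exp_sub_smul_mulVec A T
    (continuous_const.matrix_mulVec u.continuous)).intervalIntegrable 0 T

noncomputable def reachabilityMap (A : Matrix (Fin n) (Fin n) ℝ)
    (B : Matrix (Fin n) (Fin m) ℝ) (T : ℝ) : C(ℝ, Fin m → ℝ) →ₗ[ℝ] (Fin n → ℝ) where
  toFun u := ∫ s in 0..T, NormedSpace.exp ((T - s) • A) *ᵥ (B *ᵥ u s)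
  map_add' u v := by
    simp only [ContinuousMap.add_apply, mulVec_add]
    exact intervalIntegral.integral_add
      (intervalIntegrable_exp_sub_smul_mulVec_mulVec A B T u)
      (intervalIntegrable_exp_sub_smul_mulVec_mulVec A B T v)
  map_smul' c u := by
    simp only [ContinuousMap.smul_apply, mulVec_smul, intervalIntegral.integral_smul,
      RingHom.id_apply]

theorem map_reachabilityMap (A : Matrix (Fin n) (Fin n) ℝ) (B : Matrix (Fin n) (Fin m) ℝ)
    (T : ℝ) (φ : Module.Dual ℝ (Fin n → ℝ)) (u : C(ℝ, Fin m → ℝ)) :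
    φ (reachabilityMap A B T u) =
      ∫ s in 0..T, φ (NormedSpace.exp ((T - s) • A) *ᵥ (B *ᵥ u s)) :=
  (φ.toContinuousLinearMap.intervalIntegral_comp_comm
    (intervalIntegrable_exp_sub_smul_mulVec_mulVec A B T u)).symm

theorem forall_map_reachabilityMap_eq_zero_iff (A : Matrix (Fin n) (Fin n) ℝ)
    (B : Matrix (Fin n) (Fin m) ℝ) {T : ℝ} (hT : 0 < T) (φ : Module.Dual ℝ (Fin n → ℝ)) :
    (∀ u, φ (reachabilityMap A B T u) = 0) ↔
      ∀ v, ∀ t ∈ Icc 0 T, φ (NormedSpace.exp (t • A) *ᵥ (B *ᵥ v)) = 0 := by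
  constructor
  · intro h v t ht
    let ψ : ℝ → Module.Dual ℝ (Fin m → ℝ) := fun s ↦
      φ ∘ₗ (NormedSpace.exp ((T - s) • A)).mulVecLin ∘ₗ B.mulVecLin
    -- `u(s) = Bᵀ exp((T-s)Aᵀ) z`, where `φ = ⟨z, ·⟩`
    let u : C(ℝ, Fin m → ℝ) := ⟨fun s j ↦ ψ s (Pi.single j 1), continuous_pi fun j ↦
      φ.continuous_of_finiteDimensional.comp
        (continuous_exp_sub_smul_mulVec A T continuous_const)⟩
    have hψ (s : ℝ) (x : Fin m → ℝ) : ψ s x = x ⬝ᵥ u s := (ψ s).apply_eq_dotProduct x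
    have hu : EqOn (fun s ↦ u s ⬝ᵥ u s) 0 (Icc 0 T) := by
      refine eqOn_zero_of_intervalIntegral_eq_zero hT (by fun_prop)
        (fun s ↦ by simpa using dotProduct_self_star_nonneg (u s)) ?_
      calc ∫ s in 0..T, u s ⬝ᵥ u s = ∫ s in 0..T, ψ s (u s) :=
            intervalIntegral.integral_congr fun s _ ↦ (hψ s (u s)).symm
        _ = 0 := (map_reachabilityMap A B T φ u).symm.trans (h u)
    have hs : T - t ∈ Icc 0 T := ⟨sub_nonneg.2 ht.2, sub_le_self _ ht.1⟩
    have : ψ (T - t) v = 0 := by rw [hψ, dotProduct_self_eq_zero.1 (hu hs), dotProduct_zero]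
    simpa [ψ] using this
  · intro h u
    rw [map_reachabilityMap]
    refine (intervalIntegral.integral_congr (g := fun _ ↦ 0) fun s hs ↦ ?_).trans
      intervalIntegral.integral_zero
    rw [uIcc_of_le hT.le] at hs
    exact h _ _ ⟨sub_nonneg.2 hs.2, sub_le_self _ hs.1⟩

end Matrix

theorem reachable_set_eq_kalman_span_general (n m : ℕ)
    (A : Matrix (Fin n) (Fin n) ℝ) (B : Matrix (Fin n) (Fin m) ℝ)
    (T : ℝ) (hT : 0 < T) :
    {y : Fin n → ℝ | ∃ u : ℝ → (Fin m → ℝ), Continuous u ∧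
        y = ∫ s in (0 : ℝ)..T, (NormedSpace.exp ((T - s) • A)) *ᵥ (B *ᵥ u s)} =
      ↑(Submodule.span ℝ
        {w : Fin n → ℝ | ∃ k < n, ∃ v : Fin m → ℝ, w = (A ^ k) *ᵥ (B *ᵥ v)}) := by
  have hrange : LinearMap.range (reachabilityMap A B T) = kalmanSpan A B := by
    refine Subspace.dualAnnihilator_inj.1 (Submodule.ext fun φ ↦ ?_)
    rw [mem_dualAnnihilator_kalmanSpan_iff, Submodule.mem_dualAnnihilator]
    simp only [LinearMap.mem_range, forall_exists_index, forall_apply_eq_imp_iff]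
    rw [forall_map_reachabilityMap_eq_zero_iff A B hT]
    exact forall_congr' fun v ↦ forall_map_exp_smul_mulVec_eq_zero_iff A φ _ hT
  rw [← kalmanSpan, ← hrange]
  ext y
  exact ⟨fun ⟨u, hu, hy⟩ ↦ ⟨⟨u, hu⟩, hy.symm⟩,
    fun ⟨u, hy⟩ ↦ ⟨u, u.continuous, hy.symm⟩⟩

/-- The set of states reachable from the origin at time `T > 0` by the system
`ẋ = Ax + Bu` with continuous controls, namely
`{ ∫₀ᵀ exp((T-s)•A) *ᵥ (B *ᵥ u s) ds : u continuous }`, is exactly the column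
span of the Kalman matrix `[B AB ⋯ A^(n-1)B]`. -/
theorem reachable_set_eq_kalman_span (n m : ℕ) (hn : 1 ≤ n) (hm : 1 ≤ m)
    (A : Matrix (Fin n) (Fin n) ℝ) (B : Matrix (Fin n) (Fin m) ℝ)
    (T : ℝ) (hT : 0 < T) :
    {y : Fin n → ℝ | ∃ u : ℝ → (Fin m → ℝ), Continuous u ∧
        y = ∫ s in (0 : ℝ)..T, (NormedSpace.exp ((T - s) • A)) *ᵥ (B *ᵥ u s)} =
      ↑(Submodule.span ℝ
        {w : Fin n → ℝ | ∃ k < n, ∃ v : Fin m → ℝ, w = (A ^ k) *ᵥ (B *ᵥ v)}) :=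
  reachable_set_eq_kalman_span_general n m A B T hT
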